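/- Let p, q be continuous on [t₀,∞) with p > 0, and let α, αN be continuous functions on [t₀,∞) with ∫_{t₀}^∞ exp(-∫_{t₀}^τ (2αN(s)+q(s))/p(s) ds)/p(τ) dτ =: ν < ∞. Define α*(t) = αN(t) - 1/ν(t) where ν(t) = ∫_t^∞ exp(-∫_t^τ (2αN(s)+q(s))/p(s) ds)/p(τ) dτ. Then ∫_t^∞ exp(-∫_t^τ (2α*(s)+q(s))/p(s) ds)/p(τ) dτ = +∞ for every t ≥ t₀, i.e., ν_{α*}(t) = +∞. -/

import Mathlib

/-!
Put `r = (2αN + q)/p`, `f τ = exp (-∫_t^τ r) / p τ` and `R τ = ∫_τ^∞ f`. Shifting the base point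
of the exponent gives `ν = exp (∫_t r) · R`, hence `2 / (p ν) = 2 f / R = -2 (log R)'`. The weight
of `α*` is therefore `R(t)² · f / R² = R(t)² · (1/R)'`, which is not integrable because
`R → 0⁺` makes `1/R` unbounded.
-/

open MeasureTheory Set Filter Topology

noncomputable section

def tailIntegral (f : ℝ → ℝ) (x : ℝ) : ℝ := ∫ y in Ici x, f y

def weight (r p : ℝ → ℝ) (a τ : ℝ) : ℝ := Real.exp (-∫ s in a..τ, r s) / p τ

def weightTail (r p : ℝ → ℝ) (a : ℝ) : ℝ := ∫ τ in Ici a, weight r p a τ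

end

section Primitive

variable {f : ℝ → ℝ} {a : ℝ}

lemma ContinuousOn.intervalIntegrable_of_Ici (hf : ContinuousOn f (Ici a)) {b c : ℝ}
    (hb : a ≤ b) (hc : a ≤ c) : IntervalIntegrable f volume b c :=
  (hf.mono fun _ hy => (le_inf hb hc).trans hy.1).intervalIntegrable

lemma ContinuousOn.hasDerivWithinAt_primitive_Ici (hf : ContinuousOn f (Ici a)) {x : ℝ}
    (hx : x ∈ Ici a) : HasDerivWithinAt (fun u => ∫ y in a..u, f y) (f x) (Ici a) x := by
  have hext : Continuous fun y => f (max a y) :=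
    hf.comp_continuous (continuous_const.max continuous_id) fun y => le_max_left a y
  have hprim : ∀ u ∈ Ici a, ∫ y in a..u, f y = ∫ y in a..u, f (max a y) := fun u hu =>
    intervalIntegral.integral_congr fun y hy => by
      rw [uIcc_of_le hu] at hy
      rw [max_eq_right hy.1]
  have hderiv := (hext.integral_hasStrictDerivAt a x).hasDerivAt.hasDerivWithinAt (s := Ici a)
  rw [max_eq_right hx] at hderiv
  exact hderiv.congr hprim (hprim x hx)

end Primitive

section Tail

variable {f : ℝ → ℝ} {a : ℝ}

lemma tailIntegral_eq_sub_integral (hfi : IntegrableOn f (Ici a)) {x : ℝ} (hx : x ∈ Ici a) :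
    tailIntegral f x = tailIntegral f a - ∫ y in a..x, f y := by
  rw [← intervalIntegral.integral_Ici_sub_Ici' hfi (hfi.mono_set (Ici_subset_Ici.2 hx)),
    tailIntegral, tailIntegral, sub_sub_cancel]

variable (hf : ContinuousOn f (Ici a)) (hfi : IntegrableOn f (Ici a))
include hf hfi

lemma hasDerivWithinAt_tailIntegral {x : ℝ} (hx : x ∈ Ici a) :
    HasDerivWithinAt (tailIntegral f) (-f x) (Ici a) x :=
  ((hf.hasDerivWithinAt_primitive_Ici hx).const_sub _).congr
    (fun _ hu => tailIntegral_eq_sub_integral hfi hu) (tailIntegral_eq_sub_integral hfi hx)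

lemma continuousOn_tailIntegral : ContinuousOn (tailIntegral f) (Ici a) :=
  fun _ hx => (hasDerivWithinAt_tailIntegral hf hfi hx).continuousWithinAt

lemma hasDerivAt_tailIntegral {x : ℝ} (hx : a < x) : HasDerivAt (tailIntegral f) (-f x) x :=
  (hasDerivWithinAt_tailIntegral hf hfi (le_of_lt hx)).hasDerivAt (Ici_mem_nhds hx)

variable (hfpos : ∀ x ∈ Ici a, 0 < f x)
include hfpos

lemma tailIntegral_pos {x : ℝ} (hx : a ≤ x) : 0 < tailIntegral f x := by
  have hx1 : a ≤ x + 1 := hx.trans (le_add_of_nonneg_right zero_le_one)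
  have hhead : 0 < ∫ y in x..x + 1, f y :=
    intervalIntegral.intervalIntegral_pos_of_pos_on (hf.intervalIntegrable_of_Ici hx hx1)
      (fun y hy => hfpos y (hx.trans hy.1.le)) (lt_add_one x)
  have htail : 0 ≤ tailIntegral f (x + 1) :=
    setIntegral_nonneg measurableSet_Ici fun y hy => (hfpos y (hx1.trans hy)).le
  have hsplit : tailIntegral f x - tailIntegral f (x + 1) = ∫ y in x..x + 1, f y :=
    intervalIntegral.integral_Ici_sub_Ici' (hfi.mono_set (Ici_subset_Ici.2 hx))
      (hfi.mono_set (Ici_subset_Ici.2 hx1))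
  linarith

lemma integral_div_tailIntegral {b c : ℝ} (hb : a ≤ b) (hbc : b ≤ c) :
    ∫ x in b..c, f x / tailIntegral f x =
      Real.log (tailIntegral f b) - Real.log (tailIntegral f c) := by
  have hsub : Icc b c ⊆ Ici a := fun x hx => hb.trans hx.1
  have hRne : ∀ x ∈ Icc b c, tailIntegral f x ≠ 0 :=
    fun x hx => (tailIntegral_pos hf hfi hfpos (hsub hx).out).ne'
  have hRc := (continuousOn_tailIntegral hf hfi).mono hsub
  rw [intervalIntegral.integral_eq_sub_of_hasDeriv_right_of_le
    (f' := fun x => f x / tailIntegral f x) hbc (hRc.log hRne).neg (fun x hx => ?_)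
    ((hf.mono hsub).div hRc hRne |>.mono (uIcc_of_le hbc).subset |>.intervalIntegrable)]
  · simp only [Pi.neg_apply]
    ring
  · have hx' : a < x := lt_of_le_of_lt hb hx.1
    have hderiv := ((hasDerivAt_tailIntegral hf hfi hx').log
      (tailIntegral_pos hf hfi hfpos hx'.le).ne').neg
    rw [neg_div, neg_neg] at hderiv
    exact hderiv.hasDerivWithinAt

lemma not_integrableOn_div_tailIntegral_sq :
    ¬ IntegrableOn (fun x => f x / tailIntegral f x ^ 2) (Ici a) := by
  intro hint
  have hderiv : ∀ x ∈ Ioi a,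
      HasDerivAt (fun y => (tailIntegral f y)⁻¹) (f x / tailIntegral f x ^ 2) x := by
    intro x hx
    have := (hasDerivAt_tailIntegral hf hfi hx).inv (tailIntegral_pos hf hfi hfpos hx.out.le).ne'
    rwa [neg_neg] at this
  have hzero : Tendsto (tailIntegral f) atTop (𝓝[>] 0) :=
    tendsto_nhdsWithin_iff.2 ⟨tendsto_integral_Ici_zero tendsto_id,
      eventually_ge_atTop a |>.mono fun x hx => tailIntegral_pos hf hfi hfpos hx⟩
  exact not_tendsto_nhds_of_tendsto_atTop (tendsto_inv_nhdsGT_zero.comp hzero) _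
    (tendsto_limUnder_of_hasDerivAt_of_integrableOn_Ioi hderiv
      (hint.mono_set Ioi_subset_Ici_self))

end Tail

section Weight

variable {r p : ℝ → ℝ} {a : ℝ}

lemma weight_eq_exp_mul_weight (hr : ContinuousOn r (Ici a)) {b τ : ℝ} (hb : a ≤ b)
    (hτ : a ≤ τ) : weight r p b τ = Real.exp (∫ s in a..b, r s) * weight r p a τ := by
  rw [weight, weight, ← intervalIntegral.integral_add_adjacent_intervals
    (hr.intervalIntegrable_of_Ici le_rfl hb) (hr.intervalIntegrable_of_Ici hb hτ),
    neg_add, Real.exp_add, ← mul_div_assoc, ← mul_assoc, ← Real.exp_add, add_neg_cancel,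
    Real.exp_zero, one_mul]

lemma weightTail_eq_exp_mul_tailIntegral (hr : ContinuousOn r (Ici a)) {b : ℝ} (hb : a ≤ b) :
    weightTail r p b = Real.exp (∫ s in a..b, r s) * tailIntegral (weight r p a) b := by
  rw [weightTail, tailIntegral, ← integral_const_mul]
  exact setIntegral_congr_fun measurableSet_Ici fun τ hτ =>
    weight_eq_exp_mul_weight hr hb (hb.trans hτ)

lemma weight_pos (hppos : ∀ x ∈ Ici a, 0 < p x) {τ : ℝ} (hτ : a ≤ τ) : 0 < weight r p a τ :=
  div_pos (Real.exp_pos _) (hppos τ hτ)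

lemma continuousOn_weight (hr : ContinuousOn r (Ici a)) (hp : ContinuousOn p (Ici a))
    (hppos : ∀ x ∈ Ici a, 0 < p x) : ContinuousOn (weight r p a) (Ici a) :=
  have hprim : ContinuousOn (fun τ => ∫ s in a..τ, r s) (Ici a) :=
    fun _ hx => (hr.hasDerivWithinAt_primitive_Ici hx).continuousWithinAt
  (Real.continuous_exp.comp_continuousOn hprim.neg).div hp fun x hx => (hppos x hx).ne'

lemma two_div_mul_weightTail (hr : ContinuousOn r (Ici a)) {s : ℝ} (hs : a ≤ s) :
    2 / (p s * weightTail r p s) =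
      2 * (weight r p a s / tailIntegral (weight r p a) s) := by
  rw [weightTail_eq_exp_mul_tailIntegral hr hs, weight, Real.exp_neg]
  ring

variable (hr : ContinuousOn r (Ici a)) (hp : ContinuousOn p (Ici a))
  (hppos : ∀ x ∈ Ici a, 0 < p x) (hint : IntegrableOn (weight r p a) (Ici a))
include hr hp hppos hint

lemma weight_sub_two_div_mul_weightTail {τ : ℝ} (hτ : a ≤ τ) :
    weight (fun s => r s - 2 / (p s * weightTail r p s)) p a τ =
      tailIntegral (weight r p a) a ^ 2 *
        (weight r p a τ / tailIntegral (weight r p a) τ ^ 2) := by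
  set f := weight r p a
  set R := tailIntegral f
  have hfc : ContinuousOn f (Ici a) := continuousOn_weight hr hp hppos
  have hfpos : ∀ x ∈ Ici a, 0 < f x := fun x hx => weight_pos hppos hx
  have hRpos : ∀ x, a ≤ x → 0 < R x := fun x hx => tailIntegral_pos hfc hint hfpos hx
  have hexponent : ∫ s in a..τ, (r s - 2 / (p s * weightTail r p s)) =
      (∫ s in a..τ, r s) - 2 * (Real.log (R a) - Real.log (R τ)) := by
    have hsub : uIcc a τ ⊆ Ici a := fun x hx => (uIcc_of_le hτ ▸ hx).1
    have hfR : IntervalIntegrable (fun s => 2 * (f s / R s)) volume a τ :=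
      ((hfc.div (continuousOn_tailIntegral hfc hint) fun x hx => (hRpos x hx).ne').mono
        hsub).intervalIntegrable.const_mul 2
    rw [intervalIntegral.integral_congr (g := fun s => r s - 2 * (f s / R s))
        fun s hs => by rw [two_div_mul_weightTail hr (hsub hs)],
      intervalIntegral.integral_sub (hr.intervalIntegrable_of_Ici le_rfl hτ) hfR,
      intervalIntegral.integral_const_mul, integral_div_tailIntegral hfc hint hfpos le_rfl hτ]
  have hexp_two_log : ∀ x, a ≤ x → Real.exp (2 * Real.log (R x)) = R x ^ 2 := fun x hx => by
    rw [two_mul, Real.exp_add, Real.exp_log (hRpos x hx), sq]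
  rw [weight, hexponent, neg_sub, mul_sub, Real.exp_sub, Real.exp_sub, hexp_two_log a le_rfl,
    hexp_two_log τ hτ]
  simp only [f, weight, Real.exp_neg]
  ring

theorem not_integrableOn_weight_sub_two_div_mul_weightTail :
    ¬ IntegrableOn (weight (fun s => r s - 2 / (p s * weightTail r p s)) p a) (Ici a) := by
  intro h
  have hfc := continuousOn_weight hr hp hppos
  have hfpos : ∀ x ∈ Ici a, 0 < weight r p a x := fun x hx => weight_pos hppos hx
  have hRa := tailIntegral_pos hfc hint hfpos le_rfl
  refine not_integrableOn_div_tailIntegral_sq hfc hint hfpos ?_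
  refine IntegrableOn.congr_fun (h.const_mul (tailIntegral (weight r p a) a ^ 2)⁻¹)
    (fun τ hτ => ?_) measurableSet_Ici
  rw [weight_sub_two_div_mul_weightTail hr hp hppos hint hτ,
    inv_mul_cancel_left₀ (pow_ne_zero 2 hRa.ne')]

end Weight

theorem extremal_solution_tail_divergence
    (t₀ : ℝ) (p q αN : ℝ → ℝ)
    (hp : ContinuousOn p (Set.Ici t₀)) (hq : ContinuousOn q (Set.Ici t₀))
    (hppos : ∀ t ∈ Set.Ici t₀, 0 < p t)
    (hαN : ContinuousOn αN (Set.Ici t₀))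
    (hν : MeasureTheory.IntegrableOn
      (fun τ => Real.exp (-∫ s in t₀..τ, (2 * αN s + q s) / p s) / p τ)
      (Set.Ici t₀)) :
    let ν : ℝ → ℝ := fun t =>
      ∫ τ in Set.Ici t,
        Real.exp (-∫ s in t..τ, (2 * αN s + q s) / p s) / p τ
    let αstar : ℝ → ℝ := fun t => αN t - 1 / ν t
    ∀ t ∈ Set.Ici t₀,
      ¬ MeasureTheory.IntegrableOn
        (fun τ => Real.exp (-∫ s in t..τ, (2 * αstar s + q s) / p s) / p τ)
        (Set.Ici t) := by
  intro ν αstar t ht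
  set r : ℝ → ℝ := fun s => (2 * αN s + q s) / p s
  have hr : ContinuousOn r (Ici t₀) :=
    ((continuousOn_const.mul hαN).add hq).div hp fun x hx => (hppos x hx).ne'
  have hsub : Ici t ⊆ Ici t₀ := Ici_subset_Ici.2 ht
  have hint : IntegrableOn (weight r p t) (Ici t) :=
    IntegrableOn.congr_fun ((hν.mono_set hsub).const_mul _)
      (fun τ hτ => (weight_eq_exp_mul_weight hr ht (ht.trans hτ)).symm) measurableSet_Ici
  have hcoef : (fun s => (2 * αstar s + q s) / p s) =
      fun s => r s - 2 / (p s * weightTail r p s) := by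
    funext s
    simp only [αstar, ν, r, weightTail, weight]
    ring
  rw [hcoef]
  exact not_integrableOn_weight_sub_two_div_mul_weightTail (hr.mono hsub) (hp.mono hsub)
    (fun x hx => hppos x (hsub hx)) hint
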